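/- arXiv:1202.2431 — 7 statements merged into one kernel-verified Lean document; each statement's English description precedes it below -/
import Mathlib

section
/- If f : [a,b] → ℝ is nonnegative and satisfies f(λx+(1-λ)y) ≤ f(x)/λ + f(y)/(1-λ) for all x,y ∈ [a,b] and λ ∈ (0,1) (a Godunova–Levin function), and f is integrable on [a,b] with a < b, then f((a+b)/2) ≤ (4/(b-a)) ∫_a^b f(x) dx. -/
theorem godunova_levin_hadamard (a b : ℝ) (f : ℝ → ℝ) (hab : a < b)
    (hnonneg : ∀ x ∈ Set.Icc a b, 0 ≤ f x)
    (hGL : ∀ x ∈ Set.Icc a b, ∀ y ∈ Set.Icc a b, ∀ l : ℝ, 0 < l → l < 1 →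
      f (l * x + (1 - l) * y) ≤ f x / l + f y / (1 - l))
    (hint : IntervalIntegrable f MeasureTheory.volume a b) :
    f ((a + b) / 2) ≤ 4 / (b - a) * ∫ x in a..b, f x := by
  have hba : (0:ℝ) < b - a := by linarith
  have hrefl : IntervalIntegrable (fun x => f (a + b - x)) MeasureTheory.volume a b := by
    have := hint.comp_sub_left (a + b)
    simpa using this.symm
  have hcomb : IntervalIntegrable (fun x => f x / (1/2) + f (a + b - x) / (1/2))
      MeasureTheory.volume a b := by
    apply IntervalIntegrable.add
    · exact hint.div_const _
    · exact hrefl.div_const _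
  have key : (b - a) * f ((a + b) / 2) ≤ ∫ x in a..b, (f x / (1/2) + f (a+b-x) / (1/2)) := by
    have h1 : (∫ _x in a..b, f ((a + b) / 2)) = (b - a) * f ((a + b) / 2) := by
      simp [mul_comm]
    rw [← h1]
    apply intervalIntegral.integral_mono_on hab.le (by simp) hcomb
    intro x hx
    have hx' : a + b - x ∈ Set.Icc a b := by
      constructor <;> [linarith [hx.2]; linarith [hx.1]]
    have := hGL x hx (a + b - x) hx' (1/2) (by norm_num) (by norm_num)
    have heq : (1/2 : ℝ) * x + (1 - 1/2) * (a + b - x) = (a + b) / 2 := by ring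
    rw [heq] at this
    norm_num at this ⊢
    linarith
  have hrint : (∫ x in a..b, f (a + b - x)) = ∫ x in a..b, f x := by
    have := intervalIntegral.integral_comp_sub_left f (a + b) (a := a) (b := b)
    simpa using this
  rw [intervalIntegral.integral_add (hint.div_const _) (hrefl.div_const _)] at key
  simp only [div_div_eq_mul_div, div_one] at key
  rw [intervalIntegral.integral_mul_const, intervalIntegral.integral_mul_const, hrint] at key
  rw [div_mul_eq_mul_div, le_div_iff₀ hba, mul_comm]
  nlinarith [key]
end

section
/- If f : [a,b] → ℝ is nonnegative and satisfies f(λx+(1-λ)y) ≤ f(x)+f(y) for all x,y ∈ [a,b] and λ ∈ [0,1] (a P-function), and f is integrable on [a,b] with a < b, then f((a+b)/2) ≤ (2/(b-a)) ∫_a^b f(x) dx ≤ 2(f(a)+f(b)). -/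
theorem P_function_hadamard (a b : ℝ) (f : ℝ → ℝ) (hab : a < b)
    (hnonneg : ∀ x ∈ Set.Icc a b, 0 ≤ f x)
    (hP : ∀ x ∈ Set.Icc a b, ∀ y ∈ Set.Icc a b, ∀ l : ℝ, 0 ≤ l → l ≤ 1 →
      f (l * x + (1 - l) * y) ≤ f x + f y)
    (hint : IntervalIntegrable f MeasureTheory.volume a b) :
    f ((a + b) / 2) ≤ 2 / (b - a) * ∫ x in a..b, f x ∧
    2 / (b - a) * (∫ x in a..b, f x) ≤ 2 * (f a + f b) := by
  have hba : (0:ℝ) < b - a := by linarith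
  have hint2 : IntervalIntegrable (fun x => f (a + b - x)) MeasureTheory.volume a b := by
    have := (IntervalIntegrable.comp_sub_left hint (a + b)).symm
    simpa using this
  have hrefl : (∫ x in a..b, f (a + b - x)) = ∫ x in a..b, f x := by
    rw [intervalIntegral.integral_comp_sub_left f (a + b)]
    norm_num
  constructor
  · have hptw : ∀ x ∈ Set.Icc a b, f ((a + b) / 2) ≤ f x + f (a + b - x) := by
      intro x hx
      have hx' : a + b - x ∈ Set.Icc a b := by
        constructor <;> [linarith [hx.2]; linarith [hx.1]]
      have := hP x hx (a + b - x) hx' (1/2) (by norm_num) (by norm_num)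
      have heq : (1/2 : ℝ) * x + (1 - 1/2) * (a + b - x) = (a + b) / 2 := by ring
      rwa [heq] at this
    have hmono : (∫ _x in a..b, f ((a + b) / 2)) ≤
        ∫ x in a..b, (f x + f (a + b - x)) := by
      apply intervalIntegral.integral_mono_on hab.le
        (intervalIntegrable_const) (hint.add hint2)
      exact hptw
    rw [intervalIntegral.integral_const, intervalIntegral.integral_add hint hint2,
        hrefl, smul_eq_mul] at hmono
    rw [div_mul_eq_mul_div, le_div_iff₀ hba]
    linarith
  · have hmono : (∫ x in a..b, f x) ≤ ∫ _x in a..b, (f a + f b) := by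
      apply intervalIntegral.integral_mono_on hab.le hint intervalIntegrable_const
      intro x hx
      have hx1 := hx.1
      have hx2 := hx.2
      have hl0 : (0:ℝ) ≤ (b - x) / (b - a) := div_nonneg (by linarith) hba.le
      have hl1 : (b - x) / (b - a) ≤ 1 := by
        rw [div_le_one hba]; linarith
      have := hP a (Set.left_mem_Icc.2 hab.le) b (Set.right_mem_Icc.2 hab.le)
        ((b - x) / (b - a)) hl0 hl1
      have heq : (b - x) / (b - a) * a + (1 - (b - x) / (b - a)) * b = x := by
        field_simp
        ring
      rwa [heq] at this
    rw [intervalIntegral.integral_const, smul_eq_mul] at hmono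
    rw [div_mul_eq_mul_div, div_le_iff₀ hba]
    nlinarith
end

section
/- Let h : (0,1) → (0,∞) and let f : [a,b] → ℝ be nonnegative, integrable, and h-convex, i.e., f(λx+(1-λ)y) ≤ h(λ)f(x) + h(1-λ)f(y) for all x,y ∈ [a,b], λ ∈ (0,1). Then (1/(2h(1/2))) f((a+b)/2) ≤ (1/(b-a)) ∫_a^b f(x) dx ≤ (f(a)+f(b)) ∫_0^1 h(λ) dλ. -/
/-!
For the left inequality, apply `h`-convexity with `λ = 1/2` to the symmetric pair `x`, `a + b - x`
and integrate over `[a, b]`; the reflection `x ↦ a + b - x` preserves the integral. For the right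
one, substitute `x = (b - a) t + a` and integrate the bound
`f ((b - a) t + a) ≤ h (1 - t) f a + h t f b` over `t ∈ (0, 1)`, using `∫ h (1 - t) = ∫ h t`.
-/

open MeasureTheory intervalIntegral Set

def HConvexOn (h : ℝ → ℝ) (s : Set ℝ) (f : ℝ → ℝ) : Prop :=
  ∀ x ∈ s, ∀ y ∈ s, ∀ l : ℝ, 0 < l → l < 1 → f (l * x + (1 - l) * y) ≤ h l * f x + h (1 - l) * f y

theorem IntervalIntegrable.comp_mul_add_zero_one {f : ℝ → ℝ} {a b : ℝ}
    (hf : IntervalIntegrable f volume a b) :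
    IntervalIntegrable (fun t ↦ f ((b - a) * t + a)) volume 0 1 := by
  rcases eq_or_ne (b - a) 0 with hba | hba
  · simp [hba]
  simpa [hba] using (hf.comp_add_right a).comp_mul_left (c := b - a)

namespace HConvexOn

variable {h f : ℝ → ℝ} {a b : ℝ}

theorem apply_midpoint_le (hf : HConvexOn h (Icc a b) f) {x : ℝ} (hx : x ∈ Icc a b) :
    f ((a + b) / 2) ≤ h (1 / 2) * (f x + f (a + b - x)) := by
  have hx' : a + b - x ∈ Icc a b := ⟨by linarith [hx.2], by linarith [hx.1]⟩
  have := hf x hx (a + b - x) hx' (1 / 2) (by norm_num) (by norm_num)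
  rwa [show (1 : ℝ) - 1 / 2 = 1 / 2 by norm_num,
    show 1 / 2 * x + 1 / 2 * (a + b - x) = (a + b) / 2 by ring, ← mul_add] at this

theorem sub_mul_apply_midpoint_le (hf : HConvexOn h (Icc a b) f) (hab : a ≤ b)
    (hint : IntervalIntegrable f volume a b) :
    (b - a) * f ((a + b) / 2) ≤ 2 * h (1 / 2) * ∫ x in a..b, f x := by
  have hrefl : IntervalIntegrable (fun x ↦ f (a + b - x)) volume a b := by
    simpa using (hint.comp_sub_left (a + b)).symm
  calc (b - a) * f ((a + b) / 2) = ∫ _ in a..b, f ((a + b) / 2) := by simp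
    _ ≤ ∫ x in a..b, h (1 / 2) * (f x + f (a + b - x)) :=
      integral_mono_on hab intervalIntegrable_const ((hint.add hrefl).const_mul _)
        fun x hx ↦ hf.apply_midpoint_le hx
    _ = 2 * h (1 / 2) * ∫ x in a..b, f x := by
      rw [intervalIntegral.integral_const_mul, integral_add hint hrefl,
        integral_comp_sub_left (fun x ↦ f x), add_sub_cancel_right, add_sub_cancel_left]
      ring

theorem apply_sub_mul_add_le (hf : HConvexOn h (Icc a b) f) (hab : a ≤ b) {t : ℝ}
    (ht : t ∈ Ioo 0 1) :
    f ((b - a) * t + a) ≤ h (1 - t) * f a + h t * f b := by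
  rw [show (b - a) * t + a = t * b + (1 - t) * a by ring, add_comm (h (1 - t) * f a)]
  exact hf b (right_mem_Icc.2 hab) a (left_mem_Icc.2 hab) t ht.1 ht.2

theorem integral_le (hf : HConvexOn h (Icc a b) f) (hab : a ≤ b)
    (hint : IntervalIntegrable f volume a b) (hinth : IntervalIntegrable h volume 0 1) :
    ∫ x in a..b, f x ≤ (b - a) * ((f a + f b) * ∫ t in (0 : ℝ)..1, h t) := by
  have hinth' : IntervalIntegrable (fun t ↦ h (1 - t)) volume 0 1 := by
    simpa using (hinth.comp_sub_left 1).symm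
  have hbound : ∫ t in (0 : ℝ)..1, f ((b - a) * t + a) ≤ (f a + f b) * ∫ t in (0 : ℝ)..1, h t :=
    calc ∫ t in (0 : ℝ)..1, f ((b - a) * t + a)
        ≤ ∫ t in (0 : ℝ)..1, h (1 - t) * f a + h t * f b :=
          integral_mono_on_of_le_Ioo zero_le_one hint.comp_mul_add_zero_one
            ((hinth'.mul_const _).add (hinth.mul_const _)) fun t ht ↦ hf.apply_sub_mul_add_le hab ht
      _ = (f a + f b) * ∫ t in (0 : ℝ)..1, h t := by
          rw [integral_add (hinth'.mul_const _) (hinth.mul_const _),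
            intervalIntegral.integral_mul_const, intervalIntegral.integral_mul_const,
            integral_comp_sub_left (fun t ↦ h t), sub_self, sub_zero]
          ring
  calc ∫ x in a..b, f x = (b - a) * ∫ t in (0 : ℝ)..1, f ((b - a) * t + a) := by
        rw [← smul_eq_mul, smul_integral_comp_mul_add]
        simp
    _ ≤ _ := mul_le_mul_of_nonneg_left hbound (sub_nonneg.2 hab)

end HConvexOn

theorem h_convex_hadamard_general (a b : ℝ) (f h : ℝ → ℝ) (hab : a < b)
    (hhpos : ∀ l : ℝ, 0 < l → l < 1 → 0 < h l)
    (hconv : ∀ x ∈ Set.Icc a b, ∀ y ∈ Set.Icc a b, ∀ l : ℝ, 0 < l → l < 1 →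
      f (l * x + (1 - l) * y) ≤ h l * f x + h (1 - l) * f y)
    (hint : IntervalIntegrable f MeasureTheory.volume a b)
    (hinth : IntervalIntegrable h MeasureTheory.volume 0 1) :
    (1 / (2 * h (1 / 2))) * f ((a + b) / 2) ≤ (1 / (b - a)) * ∫ x in a..b, f x ∧
    (1 / (b - a)) * (∫ x in a..b, f x) ≤ (f a + f b) * ∫ l in (0:ℝ)..1, h l := by
  have hf : HConvexOn h (Icc a b) f := hconv
  have hba : 0 < b - a := sub_pos.2 hab
  have hh : 0 < 2 * h (1 / 2) := by linarith [hhpos (1 / 2) (by norm_num) (by norm_num)]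
  constructor
  · rw [one_div_mul_eq_div, one_div_mul_eq_div, div_le_div_iff₀ hh hba, mul_comm (f _),
      mul_comm (∫ x in a..b, f x)]
    exact hf.sub_mul_apply_midpoint_le hab.le hint
  · rw [one_div_mul_eq_div, div_le_iff₀' hba]
    exact hf.integral_le hab.le hint hinth

theorem h_convex_hadamard (a b : ℝ) (f h : ℝ → ℝ) (hab : a < b)
    (hhpos : ∀ l : ℝ, 0 < l → l < 1 → 0 < h l)
    (hnonneg : ∀ x ∈ Set.Icc a b, 0 ≤ f x)
    (hconv : ∀ x ∈ Set.Icc a b, ∀ y ∈ Set.Icc a b, ∀ l : ℝ, 0 < l → l < 1 →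
      f (l * x + (1 - l) * y) ≤ h l * f x + h (1 - l) * f y)
    (hint : IntervalIntegrable f MeasureTheory.volume a b)
    (hinth : IntervalIntegrable h MeasureTheory.volume 0 1) :
    (1 / (2 * h (1 / 2))) * f ((a + b) / 2) ≤ (1 / (b - a)) * ∫ x in a..b, f x ∧
    (1 / (b - a)) * (∫ x in a..b, f x) ≤ (f a + f b) * ∫ l in (0:ℝ)..1, h l :=
  h_convex_hadamard_general a b f h hab hhpos hconv hint hinth
end

section
/- Let f : [a,b] → ℝ be positive, integrable, and convex, with 0 ≤ a < b and α > 0. Then f((a+b)/2) ≤ (Γ(α+1)/(2(b-a)^α)) [J_{a+}^α f(b) + J_{b-}^α f(a)] ≤ (f(a)+f(b))/2, where J_{a+}^α f(b) = (1/Γ(α)) ∫_a^b (b-t)^{α-1} f(t) dt and J_{b-}^α f(a) = (1/Γ(α)) ∫_a^b (t-a)^{α-1} f(t) dt. -/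
/-! The substitution t ↦ a + b - t turns the sum of the two fractional integrals into
∫ (b - t)^(α-1) (f t + f (a + b - t)) dt over [a, b]. Convexity pins the integrand's second factor
between 2 f((a + b)/2) and f a + f b, and the weight has mass (b - a)^α / α, which the factor
Γ(α + 1) / Γ(α) = α normalises away. -/

open MeasureTheory Set intervalIntegral Filter
open scoped Interval

section Reflection

variable {a b : ℝ} {g : ℝ → ℝ}

theorem IntervalIntegrable.comp_add_sub (hg : IntervalIntegrable g volume a b) :
    IntervalIntegrable (fun x => g (a + b - x)) volume a b := by
  simpa using (hg.comp_sub_left (a + b)).symm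

theorem intervalIntegral.integral_comp_add_sub (g : ℝ → ℝ) :
    ∫ x in a..b, g (a + b - x) = ∫ x in a..b, g x := by
  simp

end Reflection

theorem IntervalIntegrable.mul_of_abs_le {w g : ℝ → ℝ} {a b C : ℝ}
    (hw : IntervalIntegrable w volume a b) (hg : AEStronglyMeasurable g (volume.restrict (Ι a b)))
    (hC : ∀ t ∈ Ι a b, |g t| ≤ C) :
    IntervalIntegrable (fun t => w t * g t) volume a b := by
  rw [intervalIntegrable_iff] at hw ⊢
  exact hw.mul_bdd hg ((ae_restrict_iff' measurableSet_uIoc).2 (Eventually.of_forall hC))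

theorem intervalIntegrable_sub_rpow (a b : ℝ) {r : ℝ} (hr : -1 < r) :
    IntervalIntegrable (fun t : ℝ => (b - t) ^ r) volume a b := by
  simpa using (intervalIntegrable_rpow' hr (a := b - a) (b := b - b)).comp_sub_left b

theorem integral_sub_rpow (a b : ℝ) {r : ℝ} (hr : -1 < r) :
    ∫ t in a..b, (b - t) ^ r = (b - a) ^ (r + 1) / (r + 1) := by
  rw [integral_comp_sub_left (fun s => s ^ r) b, sub_self, integral_rpow (Or.inl hr),
    Real.zero_rpow (by linarith)]
  ring

theorem intervalIntegral.integral_mul_mem_Icc_of_mem_Icc {w g : ℝ → ℝ} {a b m M : ℝ}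
    (hab : a ≤ b) (hw : IntervalIntegrable w volume a b)
    (hwg : IntervalIntegrable (fun t => w t * g t) volume a b)
    (hw0 : ∀ t ∈ Icc a b, 0 ≤ w t) (hg : ∀ t ∈ Icc a b, g t ∈ Icc m M) :
    ∫ t in a..b, w t * g t ∈ Icc (m * ∫ t in a..b, w t) (M * ∫ t in a..b, w t) := by
  rw [← integral_const_mul, ← integral_const_mul]
  constructor
  · refine integral_mono_on hab (hw.const_mul m) hwg fun t ht => ?_
    rw [mul_comm]
    exact mul_le_mul_of_nonneg_left (hg t ht).1 (hw0 t ht)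
  · refine integral_mono_on hab hwg (hw.const_mul M) fun t ht => ?_
    rw [mul_comm M]
    exact mul_le_mul_of_nonneg_left (hg t ht).2 (hw0 t ht)

section Convex

variable {a b : ℝ} {f : ℝ → ℝ} {t : ℝ}

theorem ConvexOn.two_mul_map_midpoint_le (hf : ConvexOn ℝ (Icc a b) f) (ht : t ∈ Icc a b) :
    2 * f ((a + b) / 2) ≤ f t + f (a + b - t) := by
  have ht' : a + b - t ∈ Icc a b := ⟨by linarith [ht.2], by linarith [ht.1]⟩
  have h := hf.2 ht ht' (by norm_num : (0 : ℝ) ≤ 1 / 2) (by norm_num : (0 : ℝ) ≤ 1 / 2)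
    (by norm_num)
  simp only [smul_eq_mul] at h
  rw [show 1 / 2 * t + 1 / 2 * (a + b - t) = (a + b) / 2 by ring] at h
  linarith

theorem ConvexOn.le_secant (hf : ConvexOn ℝ (Icc a b) f) (hab : a < b) (ht : t ∈ Icc a b) :
    f t ≤ ((b - t) * f a + (t - a) * f b) / (b - a) := by
  have hba : 0 < b - a := sub_pos.2 hab
  have h := hf.2 (left_mem_Icc.2 hab.le) (right_mem_Icc.2 hab.le)
    (div_nonneg (sub_nonneg.2 ht.2) hba.le) (div_nonneg (sub_nonneg.2 ht.1) hba.le)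
    (by field_simp; ring)
  simp only [smul_eq_mul] at h
  rw [show (b - t) / (b - a) * a + (t - a) / (b - a) * b = t by field_simp; ring] at h
  calc f t ≤ (b - t) / (b - a) * f a + (t - a) / (b - a) * f b := h
    _ = ((b - t) * f a + (t - a) * f b) / (b - a) := by ring

theorem ConvexOn.add_map_add_sub_le (hf : ConvexOn ℝ (Icc a b) f) (hab : a < b)
    (ht : t ∈ Icc a b) : f t + f (a + b - t) ≤ f a + f b := by
  have ht' : a + b - t ∈ Icc a b := ⟨by linarith [ht.2], by linarith [ht.1]⟩
  have h₁ := hf.le_secant hab ht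
  have h₂ := hf.le_secant hab ht'
  have hsum : ((b - t) * f a + (t - a) * f b) / (b - a) +
      ((b - (a + b - t)) * f a + (a + b - t - a) * f b) / (b - a) = f a + f b := by
    field_simp [(sub_pos.2 hab).ne']
    ring
  linarith

end Convex

section Weighted

variable {a b r C : ℝ} {f : ℝ → ℝ}

theorem IntervalIntegrable.sub_rpow_mul (hf : IntervalIntegrable f volume a b) (hr : -1 < r)
    (hC : ∀ t ∈ Ι a b, |f t| ≤ C) :
    IntervalIntegrable (fun t => (b - t) ^ r * f t) volume a b :=
  (intervalIntegrable_sub_rpow a b hr).mul_of_abs_le hf.def'.aestronglyMeasurable hC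

theorem IntervalIntegrable.sub_rpow_mul_comp_add_sub (hf : IntervalIntegrable f volume a b)
    (hr : -1 < r) (hC : ∀ t ∈ Ι a b, |f t| ≤ C) :
    IntervalIntegrable (fun t => (b - t) ^ r * f (a + b - t)) volume a b := by
  have h := (intervalIntegrable_sub_rpow a b hr).comp_add_sub.mul_of_abs_le
    hf.def'.aestronglyMeasurable hC
  simpa using h.comp_add_sub

theorem integral_sub_rpow_mul_comp_add_sub (f : ℝ → ℝ) :
    ∫ t in a..b, (b - t) ^ r * f (a + b - t) = ∫ t in a..b, (t - a) ^ r * f t := by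
  have hsub (t : ℝ) : b - (a + b - t) = t - a := by ring
  simpa [hsub] using
    (integral_comp_add_sub (a := a) (b := b) fun t => (b - t) ^ r * f (a + b - t)).symm

theorem integral_sub_rpow_mul_add_comp_add_sub (hf : IntervalIntegrable f volume a b)
    (hr : -1 < r) (hC : ∀ t ∈ Ι a b, |f t| ≤ C) :
    ∫ t in a..b, (b - t) ^ r * (f t + f (a + b - t)) =
      (∫ t in a..b, (b - t) ^ r * f t) + ∫ t in a..b, (t - a) ^ r * f t := by
  simp only [mul_add, integral_add (hf.sub_rpow_mul hr hC) (hf.sub_rpow_mul_comp_add_sub hr hC),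
    integral_sub_rpow_mul_comp_add_sub]

end Weighted

theorem ConvexOn.integral_mul_add_comp_add_sub_mem_Icc {a b : ℝ} {f w : ℝ → ℝ}
    (hf : ConvexOn ℝ (Icc a b) f) (hab : a < b) (hw : IntervalIntegrable w volume a b)
    (hwf : IntervalIntegrable (fun t => w t * (f t + f (a + b - t))) volume a b)
    (hw0 : ∀ t ∈ Icc a b, 0 ≤ w t) :
    ∫ t in a..b, w t * (f t + f (a + b - t)) ∈
      Icc (2 * f ((a + b) / 2) * ∫ t in a..b, w t) ((f a + f b) * ∫ t in a..b, w t) :=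
  integral_mul_mem_Icc_of_mem_Icc hab.le hw hwf hw0
    fun _ ht => ⟨hf.two_mul_map_midpoint_le ht, hf.add_map_add_sub_le hab ht⟩

theorem fractional_hadamard_convex_general (a b α : ℝ) (f : ℝ → ℝ)
    (hab : a < b) (hα : 0 < α)
    (hpos : ∀ x ∈ Set.Icc a b, 0 < f x)
    (hconv : ConvexOn ℝ (Set.Icc a b) f)
    (hint : IntervalIntegrable f MeasureTheory.volume a b) :
    f ((a + b) / 2) ≤ Real.Gamma (α + 1) / (2 * (b - a) ^ α) *
      ((1 / Real.Gamma α) * (∫ t in a..b, (b - t) ^ (α - 1) * f t) +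
       (1 / Real.Gamma α) * (∫ t in a..b, (t - a) ^ (α - 1) * f t)) ∧
    Real.Gamma (α + 1) / (2 * (b - a) ^ α) *
      ((1 / Real.Gamma α) * (∫ t in a..b, (b - t) ^ (α - 1) * f t) +
       (1 / Real.Gamma α) * (∫ t in a..b, (t - a) ^ (α - 1) * f t)) ≤
      (f a + f b) / 2 := by
  have hr : -1 < α - 1 := by linarith
  have hC : ∀ t ∈ Ι a b, |f t| ≤ max (f a) (f b) := by
    intro t ht
    rw [uIoc_of_le hab.le] at ht
    have ht' := Ioc_subset_Icc_self ht
    rw [abs_of_pos (hpos t ht')]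
    exact hconv.le_max_of_mem_Icc (left_mem_Icc.2 hab.le) (right_mem_Icc.2 hab.le) ht'
  have hbounds := hconv.integral_mul_add_comp_add_sub_mem_Icc hab
    (intervalIntegrable_sub_rpow a b hr)
    (by simpa only [mul_add] using
      (hint.sub_rpow_mul hr hC).add (hint.sub_rpow_mul_comp_add_sub hr hC))
    (fun t ht => Real.rpow_nonneg (sub_nonneg.2 ht.2) _)
  rw [integral_sub_rpow_mul_add_comp_add_sub hint hr hC, integral_sub_rpow a b hr,
    sub_add_cancel] at hbounds
  have hnormalize : Real.Gamma (α + 1) / (2 * (b - a) ^ α) *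
      ((1 / Real.Gamma α) * (∫ t in a..b, (b - t) ^ (α - 1) * f t) +
       (1 / Real.Gamma α) * (∫ t in a..b, (t - a) ^ (α - 1) * f t)) =
      ((∫ t in a..b, (b - t) ^ (α - 1) * f t) + ∫ t in a..b, (t - a) ^ (α - 1) * f t) /
        (2 * ((b - a) ^ α / α)) := by
    rw [Real.Gamma_add_one hα.ne']
    field_simp [(Real.Gamma_pos_of_pos hα).ne']
  have hW : 0 < 2 * ((b - a) ^ α / α) := by have := sub_pos.2 hab; positivity
  rw [hnormalize, le_div_iff₀ hW, div_le_iff₀ hW]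
  constructor <;> linarith [hbounds.1, hbounds.2]

theorem fractional_hadamard_convex (a b α : ℝ) (f : ℝ → ℝ)
    (ha : 0 ≤ a) (hab : a < b) (hα : 0 < α)
    (hpos : ∀ x ∈ Set.Icc a b, 0 < f x)
    (hconv : ConvexOn ℝ (Set.Icc a b) f)
    (hint : IntervalIntegrable f MeasureTheory.volume a b) :
    f ((a + b) / 2) ≤ Real.Gamma (α + 1) / (2 * (b - a) ^ α) *
      ((1 / Real.Gamma α) * (∫ t in a..b, (b - t) ^ (α - 1) * f t) +
       (1 / Real.Gamma α) * (∫ t in a..b, (t - a) ^ (α - 1) * f t)) ∧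
    Real.Gamma (α + 1) / (2 * (b - a) ^ α) *
      ((1 / Real.Gamma α) * (∫ t in a..b, (b - t) ^ (α - 1) * f t) +
       (1 / Real.Gamma α) * (∫ t in a..b, (t - a) ^ (α - 1) * f t)) ≤
      (f a + f b) / 2 :=
  fractional_hadamard_convex_general a b α f hab hα hpos hconv hint
end

section
/- If f is a Godunova–Levin function on an interval I (nonnegative with f(λx+(1-λ)y) ≤ f(x)/λ + f(y)/(1-λ) for λ ∈ (0,1)), then for all x, y, z ∈ I: f(x)(x-y)(x-z) + f(y)(y-x)(y-z) + f(z)(z-x)(z-y) ≥ 0. -/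
/-!
Order the three points as `a ≤ b ≤ c`. Then the sum equals
`f a (b - a)(c - a) - f b (b - a)(c - b) + f c (c - a)(c - b)`, and writing `b` as the combination
`l a + (1 - l) c` with `l = (c - b)/(c - a)`, the Godunova–Levin inequality
`f b ≤ f a / l + f c / (1 - l)`, multiplied by `(b - a)(c - b)`, is exactly its nonnegativity.
When two of the points coincide the sum is `f · (c - a)²`, nonnegative because `f` is.
-/

def threePointSum (f : ℝ → ℝ) (x y z : ℝ) : ℝ :=
  f x * (x - y) * (x - z) + f y * (y - x) * (y - z) + f z * (z - x) * (z - y)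

lemma threePointSum_swap_left (f : ℝ → ℝ) (x y z : ℝ) :
    threePointSum f y x z = threePointSum f x y z := by
  unfold threePointSum; ring

lemma threePointSum_swap_right (f : ℝ → ℝ) (x y z : ℝ) :
    threePointSum f x z y = threePointSum f x y z := by
  unfold threePointSum; ring

lemma mul_le_of_godunovaLevin {f : ℝ → ℝ} {a b c : ℝ} (hab : a < b) (hbc : b < c)
    (hGL : ∀ l : ℝ, 0 < l → l < 1 → f (l * a + (1 - l) * c) ≤ f a / l + f c / (1 - l)) :
    f b * ((b - a) * (c - b)) ≤ (c - a) * (f a * (b - a) + f c * (c - b)) := by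
  have hba : 0 < b - a := sub_pos.2 hab
  have hcb : 0 < c - b := sub_pos.2 hbc
  have hca : 0 < c - a := by linarith
  have hfb := hGL ((c - b) / (c - a)) (div_pos hcb hca) ((div_lt_one hca).2 (by linarith))
  have hl1 : 1 - (c - b) / (c - a) = (b - a) / (c - a) := by field_simp; ring
  have hb : (c - b) / (c - a) * a + (b - a) / (c - a) * c = b := by field_simp; ring
  rw [hl1, hb, div_div_eq_mul_div, div_div_eq_mul_div] at hfb
  calc f b * ((b - a) * (c - b))
      ≤ (f a * (c - a) / (c - b) + f c * (c - a) / (b - a)) * ((b - a) * (c - b)) :=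
        mul_le_mul_of_nonneg_right hfb (mul_pos hba hcb).le
    _ = (c - a) * (f a * (b - a) + f c * (c - b)) := by field_simp

lemma threePointSum_nonneg_of_le_of_le {f : ℝ → ℝ} {a b c : ℝ} (ha : 0 ≤ f a) (hc : 0 ≤ f c)
    (hGL : ∀ l : ℝ, 0 < l → l < 1 → f (l * a + (1 - l) * c) ≤ f a / l + f c / (1 - l))
    (hab : a ≤ b) (hbc : b ≤ c) : 0 ≤ threePointSum f a b c := by
  unfold threePointSum
  rcases hab.eq_or_lt with rfl | hab
  · linarith [mul_nonneg hc (sq_nonneg (c - a))]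
  rcases hbc.eq_or_lt with rfl | hbc
  · linarith [mul_nonneg ha (sq_nonneg (b - a))]
  linarith [mul_le_of_godunovaLevin hab hbc hGL]

theorem godunova_levin_three_point_general (I : Set ℝ) (f : ℝ → ℝ)
    (hnonneg : ∀ x ∈ I, 0 ≤ f x)
    (hGL : ∀ x ∈ I, ∀ y ∈ I, ∀ l : ℝ, 0 < l → l < 1 →
      f (l * x + (1 - l) * y) ≤ f x / l + f y / (1 - l))
    (x y z : ℝ) (hx : x ∈ I) (hy : y ∈ I) (hz : z ∈ I) :
    0 ≤ f x * (x - y) * (x - z) + f y * (y - x) * (y - z) +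
      f z * (z - x) * (z - y) := by
  have sorted : ∀ a ∈ I, ∀ b, ∀ c ∈ I, a ≤ b → b ≤ c → 0 ≤ threePointSum f a b c :=
    fun a ha _ c hc ↦
      threePointSum_nonneg_of_le_of_le (hnonneg a ha) (hnonneg c hc) (hGL a ha c hc)
  change 0 ≤ threePointSum f x y z
  wlog hxy : x ≤ y generalizing x y
  · rw [← threePointSum_swap_left]
    exact this y x hy hx (le_of_not_ge hxy)
  rcases le_total y z with hyz | hzy
  · exact sorted x hx y z hz hxy hyz
  rcases le_total x z with hxz | hzx
  · rw [← threePointSum_swap_right]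
    exact sorted x hx z y hy hxz hzy
  · rw [← threePointSum_swap_right, ← threePointSum_swap_left]
    exact sorted z hz x y hy hzx hxy

theorem godunova_levin_three_point (I : Set ℝ) (hI : Convex ℝ I) (f : ℝ → ℝ)
    (hnonneg : ∀ x ∈ I, 0 ≤ f x)
    (hGL : ∀ x ∈ I, ∀ y ∈ I, ∀ l : ℝ, 0 < l → l < 1 →
      f (l * x + (1 - l) * y) ≤ f x / l + f y / (1 - l))
    (x y z : ℝ) (hx : x ∈ I) (hy : y ∈ I) (hz : z ∈ I) :
    0 ≤ f x * (x - y) * (x - z) + f y * (y - x) * (y - z) +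
      f z * (z - x) * (z - y) :=
  godunova_levin_three_point_general I f hnonneg hGL x y z hx hy hz
end

section
/- Conversely, if f : I → ℝ is nonnegative and satisfies f(x)(x-y)(x-z) + f(y)(y-x)(y-z) + f(z)(z-x)(z-y) ≥ 0 for all x,y,z ∈ I, then f(λx+(1-λ)y) ≤ f(x)/λ + f(y)/(1-λ) for all distinct x,y ∈ I and λ ∈ (0,1), i.e., f ∈ Q(I). -/
/-! At `z = l x + (1 - l) y` the three-point expression factors as
`(x - y)² (f x (1 - l) + f y l - f z l (1 - l))`, so its nonnegativity for distinct `x, y`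
is exactly `l (1 - l) f z ≤ (1 - l) f x + l f y`; dividing by `l (1 - l)` gives the claim. -/

theorem three_point_sum_convex_combination_eq (f : ℝ → ℝ) (x y l : ℝ) :
    let z := l * x + (1 - l) * y
    f x * (x - y) * (x - z) + f y * (y - x) * (y - z) + f z * (z - x) * (z - y) =
      (x - y) ^ 2 * (f x * (1 - l) + f y * l - f z * (l * (1 - l))) := by
  intro z
  ring

theorem le_div_add_div_of_mul_le {a b c l : ℝ} (hl0 : 0 < l) (hl1 : l < 1)
    (h : c * (l * (1 - l)) ≤ a * (1 - l) + b * l) : c ≤ a / l + b / (1 - l) := by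
  have h1l : 0 < 1 - l := sub_pos.2 hl1
  rw [div_add_div _ _ hl0.ne' h1l.ne', le_div_iff₀ (mul_pos hl0 h1l)]
  linarith

theorem three_point_implies_godunova_levin_general (I : Set ℝ) (hI : Convex ℝ I) (f : ℝ → ℝ)
    (h3 : ∀ x ∈ I, ∀ y ∈ I, ∀ z ∈ I,
      0 ≤ f x * (x - y) * (x - z) + f y * (y - x) * (y - z) +
        f z * (z - x) * (z - y)) :
    ∀ x ∈ I, ∀ y ∈ I, x ≠ y → ∀ l : ℝ, 0 < l → l < 1 →
      f (l * x + (1 - l) * y) ≤ f x / l + f y / (1 - l) := by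
  intro x hx y hy hxy l hl0 hl1
  have hz : l * x + (1 - l) * y ∈ I := hI hx hy hl0.le (sub_nonneg.2 hl1.le) (by ring)
  have hsum := h3 x hx y hy _ hz
  rw [three_point_sum_convex_combination_eq] at hsum
  have hsq : 0 < (x - y) ^ 2 := sq_pos_of_ne_zero (sub_ne_zero.2 hxy)
  exact le_div_add_div_of_mul_le hl0 hl1
    (sub_nonneg.1 (nonneg_of_mul_nonneg_right hsum hsq))

theorem three_point_implies_godunova_levin (I : Set ℝ) (hI : Convex ℝ I) (f : ℝ → ℝ)
    (hnonneg : ∀ x ∈ I, 0 ≤ f x)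
    (h3 : ∀ x ∈ I, ∀ y ∈ I, ∀ z ∈ I,
      0 ≤ f x * (x - y) * (x - z) + f y * (y - x) * (y - z) +
        f z * (z - x) * (z - y)) :
    ∀ x ∈ I, ∀ y ∈ I, x ≠ y → ∀ l : ℝ, 0 < l → l < 1 →
      f (l * x + (1 - l) * y) ≤ f x / l + f y / (1 - l) :=
  three_point_implies_godunova_levin_general I hI f h3
end

section
/- For 0 < r ≤ 1, α > 0, and positive reals A, B: ∫_0^1 t^{α-1} (t A^r + (1-t) B^r)^{1/r} dt ≤ [(1/(α+1/r))^r A^r + B(α,(r+1)/r)^r B^r]^{1/r}, where B(·,·) is the Beta function. -/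
/-!
Write the integrand as `w (F + G) ^ (1 / r)` with weight `w t = t ^ (α - 1)`,
`F t = t A ^ r` and `G t = (1 - t) B ^ r`. Absorbing the weight, `w (F + G) ^ (1 / r)` is
`(w ^ r F + w ^ r G) ^ (1 / r)`, so Minkowski's inequality in `L ^ (1 / r)` with `1 / r ≥ 1`
bounds its integral by `((∫ w F ^ (1 / r)) ^ r + (∫ w G ^ (1 / r)) ^ r) ^ (1 / r)`. The two
remaining integrals are `A / (α + 1 / r)` and `B` times a Beta integral.
-/

open MeasureTheory Set

theorem Real.rpow_mul_rpow_one_div {r x y : ℝ} (hr : r ≠ 0) (hx : 0 ≤ x) (hy : 0 ≤ y) :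
    (x ^ r * y) ^ (1 / r) = x * y ^ (1 / r) := by
  rw [Real.mul_rpow (Real.rpow_nonneg hx r) hy, one_div, Real.rpow_rpow_inv hx hr]

section Minkowski

variable {X : Type*} [MeasurableSpace X] {μ : Measure X} {r : ℝ}

theorem integral_add_rpow_one_div_le (hr0 : 0 < r) (hr1 : r ≤ 1) {f g : X → ℝ}
    (hf : 0 ≤ᵐ[μ] f) (hg : 0 ≤ᵐ[μ] g) (hfm : AEMeasurable f μ) (hgm : AEMeasurable g μ)
    (hfi : Integrable (fun x => f x ^ (1 / r)) μ) (hgi : Integrable (fun x => g x ^ (1 / r)) μ) :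
    ∫ x, (f x + g x) ^ (1 / r) ∂μ ≤
      ((∫ x, f x ^ (1 / r) ∂μ) ^ r + (∫ x, g x ^ (1 / r) ∂μ) ^ r) ^ (1 / r) := by
  have hp : 0 ≤ 1 / r := by positivity
  have hpow_nonneg {h : X → ℝ} (hh : 0 ≤ᵐ[μ] h) : 0 ≤ ∫ x, h x ^ (1 / r) ∂μ :=
    integral_nonneg_of_ae (hh.mono fun x hx => Real.rpow_nonneg hx _)
  have hfg : 0 ≤ᵐ[μ] fun x => f x + g x := by
    filter_upwards [hf, hg] with x hfx hgx using add_nonneg hfx hgx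
  by_cases hfgi : Integrable (fun x => (f x + g x) ^ (1 / r)) μ
  swap
  · rw [integral_undef hfgi]
    exact Real.rpow_nonneg (add_nonneg (Real.rpow_nonneg (hpow_nonneg hf) _)
      (Real.rpow_nonneg (hpow_nonneg hg) _)) _
  have hofReal {h : X → ℝ} (hh : 0 ≤ᵐ[μ] h) (hhi : Integrable (fun x => h x ^ (1 / r)) μ) :
      ∫⁻ x, ENNReal.ofReal (h x) ^ (1 / r) ∂μ = ENNReal.ofReal (∫ x, h x ^ (1 / r) ∂μ) := by
    rw [ofReal_integral_eq_lintegral_ofReal hhi (hh.mono fun x hx => Real.rpow_nonneg hx _)]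
    exact lintegral_congr_ae (hh.mono fun x hx => ENNReal.ofReal_rpow_of_nonneg hx hp)
  have hsum : ∀ᵐ x ∂μ,
      ENNReal.ofReal (f x) + ENNReal.ofReal (g x) = ENNReal.ofReal (f x + g x) := by
    filter_upwards [hf, hg] with x hfx hgx using (ENNReal.ofReal_add hfx hgx).symm
  have hmink := ENNReal.lintegral_Lp_add_le hfm.ennreal_ofReal hgm.ennreal_ofReal
    ((one_le_div hr0).2 hr1)
  have hL := hpow_nonneg hfg
  have hF := Real.rpow_nonneg (hpow_nonneg hf) r
  have hG := Real.rpow_nonneg (hpow_nonneg hg) r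
  simp only [Pi.add_apply, one_div_one_div] at hmink
  rw [lintegral_congr_ae (hsum.mono fun x hx => by rw [hx]), hofReal hfg hfgi, hofReal hf hfi,
    hofReal hg hgi, ENNReal.ofReal_rpow_of_nonneg hL hr0.le,
    ENNReal.ofReal_rpow_of_nonneg (hpow_nonneg hf) hr0.le,
    ENNReal.ofReal_rpow_of_nonneg (hpow_nonneg hg) hr0.le, ← ENNReal.ofReal_add hF hG,
    ENNReal.ofReal_le_ofReal_iff (add_nonneg hF hG)] at hmink
  calc ∫ x, (f x + g x) ^ (1 / r) ∂μ = ((∫ x, (f x + g x) ^ (1 / r) ∂μ) ^ r) ^ (1 / r) := by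
        rw [← Real.rpow_mul hL, mul_one_div_cancel hr0.ne', Real.rpow_one]
    _ ≤ _ := Real.rpow_le_rpow (Real.rpow_nonneg hL r) hmink hp

theorem integral_mul_add_rpow_one_div_le (hr0 : 0 < r) (hr1 : r ≤ 1) {w F G : X → ℝ}
    (hw : 0 ≤ᵐ[μ] w) (hF : 0 ≤ᵐ[μ] F) (hG : 0 ≤ᵐ[μ] G)
    (hwm : AEMeasurable w μ) (hFm : AEMeasurable F μ) (hGm : AEMeasurable G μ)
    (hFi : Integrable (fun x => w x * F x ^ (1 / r)) μ)
    (hGi : Integrable (fun x => w x * G x ^ (1 / r)) μ) :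
    ∫ x, w x * (F x + G x) ^ (1 / r) ∂μ ≤
      ((∫ x, w x * F x ^ (1 / r) ∂μ) ^ r + (∫ x, w x * G x ^ (1 / r) ∂μ) ^ r) ^ (1 / r) := by
  have hweight {H : X → ℝ} (hH : 0 ≤ᵐ[μ] H) :
      (fun x => (w x ^ r * H x) ^ (1 / r)) =ᵐ[μ] fun x => w x * H x ^ (1 / r) := by
    filter_upwards [hw, hH] with x hwx hHx using Real.rpow_mul_rpow_one_div hr0.ne' hwx hHx
  have hscaled {H : X → ℝ} (hH : 0 ≤ᵐ[μ] H) : 0 ≤ᵐ[μ] fun x => w x ^ r * H x := by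
    filter_upwards [hw, hH] with x hwx hHx using mul_nonneg (Real.rpow_nonneg hwx r) hHx
  have hFG : 0 ≤ᵐ[μ] fun x => F x + G x := by
    filter_upwards [hF, hG] with x hFx hGx using add_nonneg hFx hGx
  have hmink := integral_add_rpow_one_div_le hr0 hr1 (hscaled hF) (hscaled hG)
    ((hwm.pow_const r).mul hFm) ((hwm.pow_const r).mul hGm)
    (hFi.congr (hweight hF).symm) (hGi.congr (hweight hG).symm)
  simp only [← mul_add] at hmink
  rwa [integral_congr_ae (hweight hF), integral_congr_ae (hweight hG),
    integral_congr_ae (hweight hFG)] at hmink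

theorem integral_mul_mul_rpow_rpow_one_div (hr : r ≠ 0) {w φ : X → ℝ} (hφ : 0 ≤ᵐ[μ] φ)
    {c : ℝ} (hc : 0 ≤ c) :
    ∫ x, w x * (φ x * c ^ r) ^ (1 / r) ∂μ = (∫ x, w x * φ x ^ (1 / r) ∂μ) * c := by
  rw [← integral_mul_const]
  refine integral_congr_ae (hφ.mono fun x hφx => ?_)
  simp only [mul_comm (φ x), Real.rpow_mul_rpow_one_div hr hc hφx]
  ring

end Minkowski

theorem integral_Ioc_zero_one_rpow_sub_one_mul_rpow {a b : ℝ} (ha : 0 < a) (hb : 0 ≤ b) :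
    ∫ t in Ioc (0 : ℝ) 1, t ^ (a - 1) * t ^ b = 1 / (a + b) := by
  have hexp : a - 1 + b + 1 = a + b := by ring
  rw [setIntegral_congr_fun measurableSet_Ioc fun t ht => (Real.rpow_add ht.1 _ b).symm,
    ← intervalIntegral.integral_of_le zero_le_one, integral_rpow (.inl (by linarith)), hexp,
    Real.one_rpow, Real.zero_rpow (by positivity), sub_zero]

theorem minkowski_beta_inequality (α r A B : ℝ)
    (hα : 0 < α) (hr0 : 0 < r) (hr1 : r ≤ 1) (hA : 0 < A) (hB : 0 < B) :
    (∫ t in (0:ℝ)..1, t ^ (α - 1) * (t * A ^ r + (1 - t) * B ^ r) ^ (1 / r)) ≤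
      ((1 / (α + 1 / r)) ^ r * A ^ r +
        (∫ t in (0:ℝ)..1, t ^ (α - 1) * (1 - t) ^ ((r + 1) / r - 1)) ^ r * B ^ r) ^ (1 / r) := by
  have hp : 0 ≤ 1 / r := by positivity
  have hexp : (r + 1) / r - 1 = 1 / r := by field_simp; ring
  have ht : ∀ᵐ t ∂volume.restrict (Ioc (0 : ℝ) 1), 0 ≤ t :=
    ae_restrict_of_forall_mem measurableSet_Ioc fun t ht => ht.1.le
  have h1t : ∀ᵐ t ∂volume.restrict (Ioc (0 : ℝ) 1), 0 ≤ 1 - t :=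
    ae_restrict_of_forall_mem measurableSet_Ioc fun t ht => sub_nonneg.2 ht.2
  have hint {φ : ℝ → ℝ} (hφ : Continuous φ) :
      Integrable (fun t => t ^ (α - 1) * φ t ^ (1 / r)) (volume.restrict (Ioc (0 : ℝ) 1)) :=
    ((intervalIntegral.intervalIntegrable_rpow' (by linarith)).mul_continuousOn
      ((Real.continuous_rpow_const hp).comp hφ).continuousOn).1
  rw [hexp, intervalIntegral.integral_of_le zero_le_one,
    intervalIntegral.integral_of_le zero_le_one]
  calc _ ≤ _ := integral_mul_add_rpow_one_div_le hr0 hr1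
        (ht.mono fun t ht => Real.rpow_nonneg ht _)
        (ht.mono fun t ht => mul_nonneg ht (Real.rpow_nonneg hA.le r))
        (h1t.mono fun t ht => mul_nonneg ht (Real.rpow_nonneg hB.le r))
        (by fun_prop) (by fun_prop) (by fun_prop) (hint (by fun_prop)) (hint (by fun_prop))
    _ = _ := by
      rw [integral_mul_mul_rpow_rpow_one_div hr0.ne' ht hA.le,
        integral_mul_mul_rpow_rpow_one_div hr0.ne' h1t hB.le,
        integral_Ioc_zero_one_rpow_sub_one_mul_rpow hα hp,
        Real.mul_rpow (by positivity) hA.le, Real.mul_rpow _ hB.le]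
      exact setIntegral_nonneg_of_ae_restrict
        (by filter_upwards [ht, h1t] with t h0 h1 using by positivity)
end
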